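/- Let j ≥ 3 and s ≥ 1 with j odd and s odd, and let d be an even integer with 0 ≤ d ≤ (j-1)s - 1. Then there exists a d-regular spanning subgraph of the complete multipartite graph K_{j×s}. -/

import Mathlib

/-!
Take the circulant graph on the group `ℤ/j × ℤ/s` whose set of jumps `S` is closed under
negation and avoids the subgroup `0 × ℤ/s`: it is `|S|`-regular, and it lies in `K_{j×s}` because
the parts are the cosets of that subgroup. Since `j` is odd, negation has no fixed point outside
`0 × ℤ/s`, so the `(j - 1) s` admissible jumps split into pairs `{x, -x}` and `S` can be taken to be
a union of any number of these pairs.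
-/

/-- The complete balanced multipartite graph `K_{j×s}` on `Fin j × Fin s`:
vertices are adjacent iff they lie in different parts (different first coordinate). -/
def multiK (j s : ℕ) : SimpleGraph (Fin j × Fin s) where
  Adj u v := u.1 ≠ v.1
  symm := ⟨fun _ _ h => Ne.symm h⟩
  loopless := ⟨fun _ h => h rfl⟩

/-- Degree of a vertex, via `Set.ncard` of its neighbor set. -/
noncomputable def mdeg {V : Type*} (G : SimpleGraph V) (v : V) : ℕ :=
  (G.neighborSet v).ncard

/-- `K_{j×s} → (S_n, S_m)`: every red/blue edge coloring (red subgraph `R ≤ K_{j×s}`,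
blue the rest) contains a red `K_{1,n-1}` or a blue `K_{1,m-1}`. -/
def Arrows (j s n m : ℕ) : Prop :=
  ∀ R : SimpleGraph (Fin j × Fin s), R ≤ multiK j s →
    (∃ v, n - 1 ≤ mdeg R v) ∨ (∃ v, m - 1 ≤ mdeg (multiK j s \ R) v)

/-- The size Ramsey multipartite number `m_j(S_n, S_m)`. -/
noncomputable def mj (j n m : ℕ) : ℕ := sInf {s | Arrows j s n m}

open Finset SimpleGraph

theorem neg_ne_self_of_odd_natCard {G : Type*} [AddGroup G] (hG : Odd (Nat.card G)) {x : G}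
    (hx : x ≠ 0) : -x ≠ x := by
  intro h
  refine hx ((Nat.coprime_two_right.mpr hG).nsmul_right_bijective.injective ?_)
  simp only [two_nsmul, smul_zero]
  nth_rw 1 [← h]
  exact neg_add_cancel x

theorem exists_neg_closed_subset_card_eq {α : Type*} [DecidableEq α] [InvolutiveNeg α]
    {T : Finset α} (hT : ∀ x ∈ T, -x ∈ T ∧ -x ≠ x) (k : ℕ) (hk : 2 * k ≤ #T) :
    ∃ S ⊆ T, (∀ x ∈ S, -x ∈ S) ∧ #S = 2 * k := by
  induction k with
  | zero => exact ⟨∅, empty_subset T, by simp, rfl⟩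
  | succ k ih =>
    obtain ⟨S, hST, hS, hcard⟩ := ih (by omega)
    obtain ⟨x, hxT, hxS⟩ := exists_mem_notMem_of_card_lt_card (s := S) (t := T) (by omega)
    obtain ⟨hnegT, hne⟩ := hT x hxT
    have hnegS : -x ∉ S := fun h => hxS (neg_neg x ▸ hS _ h)
    refine ⟨insert x (insert (-x) S), ?_, ?_, ?_⟩
    · simp only [insert_subset_iff]
      exact ⟨hxT, hnegT, hST⟩
    · intro y hy
      simp only [mem_insert] at hy ⊢
      rcases hy with rfl | rfl | hy
      · exact Or.inr (Or.inl rfl)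
      · exact Or.inl (neg_neg x)
      · exact Or.inr (Or.inr (hS y hy))
    · rw [card_insert_of_notMem, card_insert_of_notMem hnegS, hcard]
      · ring
      · simp only [mem_insert, not_or]
        exact ⟨hne.symm, hxS⟩

section circulantGraph

variable {G : Type*} [AddGroup G] {S : Set G}

theorem circulantGraph_adj_iff_sub_mem (hS : ∀ x ∈ S, -x ∈ S) (h0 : 0 ∉ S) (u v : G) :
    (circulantGraph S).Adj u v ↔ u - v ∈ S := by
  rw [circulantGraph_adj]
  constructor
  · rintro ⟨-, h | h⟩
    · exact h
    · simpa using hS _ h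
  · intro h
    exact ⟨fun huv => h0 (by simpa [huv] using h), Or.inl h⟩

theorem mdeg_circulantGraph (hS : ∀ x ∈ S, -x ∈ S) (h0 : 0 ∉ S) (u : G) :
    mdeg (circulantGraph S) u = S.ncard := by
  have hnbr : (circulantGraph S).neighborSet u = (u - ·) ⁻¹' S := by
    ext v
    exact circulantGraph_adj_iff_sub_mem hS h0 u v
  rw [mdeg, hnbr, Set.ncard_preimage_of_injective_subset_range sub_right_injective]
  intro x _
  exact ⟨-x + u, by simp [sub_eq_add_neg]⟩

end circulantGraph

theorem circulantGraph_le_multiK {j s : ℕ} [NeZero j] [NeZero s] {S : Set (Fin j × Fin s)}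
    (hS : ∀ x ∈ S, x.1 ≠ 0) : circulantGraph S ≤ multiK j s := by
  rintro u v ⟨-, h | h⟩
  · exact sub_ne_zero.mp (hS _ h)
  · exact (sub_ne_zero.mp (hS _ h)).symm

theorem stmt6_general (j s d : ℕ) (hs : 1 ≤ s)
    (hjo : Odd j) (hd : Even d) (hdle : d ≤ (j - 1) * s - 1) :
    ∃ H : SimpleGraph (Fin j × Fin s), H ≤ multiK j s ∧ ∀ v, mdeg H v = d := by
  have : NeZero j := ⟨hjo.pos.ne'⟩
  have : NeZero s := ⟨by omega⟩
  set T : Finset (Fin j × Fin s) := {0}ᶜ ×ˢ univ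
  have hmemT : ∀ x, x ∈ T ↔ x.1 ≠ 0 := by simp [T]
  have hT : ∀ x ∈ T, -x ∈ T ∧ -x ≠ x := by
    intro x hx
    rw [hmemT] at hx
    refine ⟨(hmemT _).mpr (neg_ne_zero.mpr hx), fun h => ?_⟩
    exact neg_ne_self_of_odd_natCard (by rwa [Nat.card_fin]) hx (congrArg Prod.fst h)
  have hcardT : #T = (j - 1) * s := by simp [T, card_compl]
  obtain ⟨k, rfl⟩ := hd
  obtain ⟨S, hST, hS, hcard⟩ := exists_neg_closed_subset_card_eq hT k (by omega)
  have hS1 : ∀ x ∈ S, x.1 ≠ 0 := fun x hx => (hmemT x).mp (hST hx)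
  have h0 : (0 : Fin j × Fin s) ∉ (S : Set _) := fun h => hS1 0 h rfl
  refine ⟨circulantGraph S, circulantGraph_le_multiK hS1, fun v => ?_⟩
  rw [mdeg_circulantGraph hS h0, Set.ncard_coe_finset, hcard]
  ring

theorem stmt6 (j s d : ℕ) (hj : 3 ≤ j) (hs : 1 ≤ s)
    (hjo : Odd j) (hso : Odd s) (hd : Even d) (hdle : d ≤ (j - 1) * s - 1) :
    ∃ H : SimpleGraph (Fin j × Fin s), H ≤ multiK j s ∧ ∀ v, mdeg H v = d :=
  stmt6_general j s d hs hjo hd hdle
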